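/- arXiv:2510.18615 — 9 statements merged into one kernel-verified Lean document; each statement's English description precedes it below -/
import Mathlib

section
/- Let Σ : (α → Bool) → Bool be a binary classifier and φ : (α → Bool) → Bool a predicate. Then the rectification of Σ by the classification rule over y with premise φ is pointwise equal to the disjunction of Σ and φ: for every instance x, (Σ ⋆ R_φ⁺) x = true if and only if Σ x = true or φ x = true. (Proposition 1, positive case.) -/
def rectify {α : Type*} (S : (α → Bool) → Bool) (F : (α → Bool) → Bool → Bool) :
    (α → Bool) → Bool :=
  fun x => (S x && !(F x false && !(F x true))) || (F x true && !(F x false))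

def rulePos {α : Type*} (φ : (α → Bool) → Bool) : (α → Bool) → Bool → Bool :=
  fun x b => !(φ x) || b

def ruleNeg {α : Type*} (φ : (α → Bool) → Bool) : (α → Bool) → Bool → Bool :=
  fun x b => !(φ x) || !b

def fconj {α : Type*} (F₁ F₂ : (α → Bool) → Bool → Bool) : (α → Bool) → Bool → Bool :=
  fun x b => F₁ x b && F₂ x b

theorem rectify_rulePos {α : Type*} (S φ : (α → Bool) → Bool) :
    ∀ x : α → Bool, (rectify S (rulePos φ) x = true ↔ (S x = true ∨ φ x = true)) := by
  intro x; cases hs : S x <;> cases hp : φ x <;> simp [rectify, rulePos, hs, hp]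
end

section
/- Let Σ : (α → Bool) → Bool be a binary classifier and φ : (α → Bool) → Bool a predicate. Then the rectification of Σ by the classification rule over ¬y with premise φ is pointwise equal to the conjunction of Σ with the negation of φ: for every instance x, (Σ ⋆ R_φ⁻) x = true if and only if Σ x = true and φ x = false. (Proposition 1, negative case.) -/
theorem rectify_ruleNeg {α : Type*} (S φ : (α → Bool) → Bool) :
    ∀ x : α → Bool, (rectify S (ruleNeg φ) x = true ↔ (S x = true ∧ φ x = false)) := by
  intro x
  simp [rectify, ruleNeg]
end

section
/- Let Σ : (α → Bool) → Bool be a binary classifier and let R₁, R₂ be two classification rules over y, with premises φ₁ and φ₂ respectively. Then rectifying Σ by the conjunction R₁ ∧ R₂ yields the same classifier as first rectifying Σ by R₁ and then rectifying the result by R₂: for every instance x, (Σ ⋆ (R₁ ∧ R₂)) x = ((Σ ⋆ R₁) ⋆ R₂) x. (Lemma 2, rules over y.) -/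
theorem rectify_conj_pos_pos {α : Type*} (S φ₁ φ₂ : (α → Bool) → Bool) :
    ∀ x : α → Bool,
      rectify S (fconj (rulePos φ₁) (rulePos φ₂)) x
        = rectify (rectify S (rulePos φ₁)) (rulePos φ₂) x := by
  intro x
  simp only [rectify, fconj, rulePos]
  cases S x <;> cases φ₁ x <;> cases φ₂ x <;> rfl
end

section
/- Let Σ : (α → Bool) → Bool be a binary classifier and let R₁, R₂ be two classification rules over ¬y, with premises φ₁ and φ₂ respectively. Then rectifying Σ by the conjunction R₁ ∧ R₂ yields the same classifier as first rectifying Σ by R₁ and then rectifying the result by R₂: for every instance x, (Σ ⋆ (R₁ ∧ R₂)) x = ((Σ ⋆ R₁) ⋆ R₂) x. (Lemma 2, rules over ¬y.) -/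
theorem rectify_conj_neg_neg {α : Type*} (S φ₁ φ₂ : (α → Bool) → Bool) :
    ∀ x : α → Bool,
      rectify S (fconj (ruleNeg φ₁) (ruleNeg φ₂)) x
        = rectify (rectify S (ruleNeg φ₁)) (ruleNeg φ₂) x := by
  intro x
  simp only [rectify, fconj, ruleNeg]
  cases S x <;> cases φ₁ x <;> cases φ₂ x <;> rfl
end

section
/- Let Σ : (α → Bool) → Bool be a binary classifier, let R₁ be the classification rule over y with premise φ₁ and R₂ the classification rule over ¬y with premise φ₂, and suppose the premises are contradictory, i.e., no instance x satisfies φ₁ x = true and φ₂ x = true. Then rectifying Σ by the conjunction R₁ ∧ R₂ yields the same classifier as first rectifying Σ by R₁ and then rectifying the result by R₂: for every instance x, (Σ ⋆ (R₁ ∧ R₂)) x = ((Σ ⋆ R₁) ⋆ R₂) x. (Lemma 3.) -/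
theorem rectify_conj_pos_neg {α : Type*} (S φ₁ φ₂ : (α → Bool) → Bool)
    (hcontra : ¬ ∃ x : α → Bool, φ₁ x = true ∧ φ₂ x = true) :
    ∀ x : α → Bool,
      rectify S (fconj (rulePos φ₁) (ruleNeg φ₂)) x
        = rectify (rectify S (rulePos φ₁)) (ruleNeg φ₂) x := by
  intro x
  push_neg at hcontra
  have h := hcontra x
  simp [rectify, rulePos, ruleNeg, fconj]
  cases h1 : φ₁ x <;> cases h2 : φ₂ x <;> simp_all
end

section
/- Let Σ, Φ : (α → Bool) → Bool be binary classifiers and let R₁, …, R_k be a finite list of classification rules (each either a rule over y or a rule over ¬y) that are all deduced from Φ. Then rectifying Σ by the conjunction R₁ ∧ … ∧ R_k yields the same classifier as rectifying Σ iteratively by R₁, then R₂, …, then R_k: for every instance x, (Σ ⋆ (R₁ ∧ … ∧ R_k)) x = ((…((Σ ⋆ R₁) ⋆ R₂) …) ⋆ R_k) x. (Proposition 2.) -/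
def listConj {α : Type*} (L : List ((α → Bool) → Bool → Bool)) :
    (α → Bool) → Bool → Bool :=
  fun x b => L.all (fun F => F x b)

lemma foldl_pos {α : Type*} (L : List ((α → Bool) → Bool → Bool)) (x : α → Bool)
    (h : ∀ F ∈ L, F x true = true) (S : (α → Bool) → Bool) :
    (L.foldl rectify S) x = (S x || !(L.all (fun F => F x false))) := by
  induction L generalizing S with
  | nil => simp
  | cons F T ih =>
    have hF : F x true = true := h F (by simp)
    have hT : ∀ G ∈ T, G x true = true := fun G hG => h G (by simp [hG])
    simp only [List.foldl_cons, List.all_cons]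
    have : rectify S F x = (S x || !(F x false)) := by
      simp [rectify, hF]
    rw [ih hT (rectify S F), this]
    cases F x false <;> cases S x <;> simp

lemma foldl_neg {α : Type*} (L : List ((α → Bool) → Bool → Bool)) (x : α → Bool)
    (h : ∀ F ∈ L, F x false = true) (S : (α → Bool) → Bool) :
    (L.foldl rectify S) x = (S x && L.all (fun F => F x true)) := by
  induction L generalizing S with
  | nil => simp
  | cons F T ih =>
    have hF : F x false = true := h F (by simp)
    have hT : ∀ G ∈ T, G x false = true := fun G hG => h G (by simp [hG])
    simp only [List.foldl_cons, List.all_cons]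
    have : rectify S F x = (S x && F x true) := by
      simp [rectify, hF]
    rw [ih hT (rectify S F), this]
    cases F x true <;> cases S x <;> simp

theorem rectify_list_conj {α : Type*} (S Φ : (α → Bool) → Bool)
    (L : List ((α → Bool) → Bool → Bool))
    (hL : ∀ F ∈ L, ∃ φ : (α → Bool) → Bool,
        (F = rulePos φ ∧ ∀ x : α → Bool, φ x = true → Φ x = true) ∨
        (F = ruleNeg φ ∧ ∀ x : α → Bool, φ x = true → Φ x = false)) :
    ∀ x : α → Bool, rectify S (listConj L) x = (L.foldl rectify S) x := by
  intro x
  cases hΦ : Φ x with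
  | true =>
    have h : ∀ F ∈ L, F x true = true := by
      intro F hF
      obtain ⟨φ, hc⟩ := hL F hF
      rcases hc with ⟨rfl, hd⟩ | ⟨rfl, hd⟩
      · simp [rulePos]
      · cases hφ : φ x
        · simp [ruleNeg, hφ]
        · have := hd x hφ; rw [hΦ] at this; exact absurd this (by simp)
    rw [foldl_pos L x h S]
    have hc : L.all (fun F => F x true) = true := by
      simp only [List.all_eq_true]; exact h
    simp [rectify, hc, listConj]
  | false =>
    have h : ∀ F ∈ L, F x false = true := by
      intro F hF
      obtain ⟨φ, hc⟩ := hL F hF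
      rcases hc with ⟨rfl, hd⟩ | ⟨rfl, hd⟩
      · cases hφ : φ x
        · simp [rulePos, hφ]
        · have := hd x hφ; rw [hΦ] at this; exact absurd this (by simp)
      · simp [ruleNeg]
    rw [foldl_neg L x h S]
    have hc : L.all (fun F => F x false) = true := by
      simp only [List.all_eq_true]; exact h
    simp [rectify, hc, listConj]
end

section
/- Let I, P : (α → Bool) → Bool be binary classifiers, let x be an instance with I x ≠ P x, and let t be an abductive explanation for x given P. Define the rectified classifier I' by: if P x = true then I' x' = (I x' or t x') for every x', and if P x = false then I' x' = (I x' and not t x') for every x'. Then the set of instances misclassified by I' relative to P is a strict subset of the set of instances misclassified by I relative to P: {x' | I' x' ≠ P x'} ⊂ {x' | I x' ≠ P x'}. (Proposition 4.) -/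
theorem rectification_strictly_improves {α : Type*} (I P : (α → Bool) → Bool)
    (x : α → Bool) (hx : I x ≠ P x) (t : (α → Bool) → Bool)
    (hcov : t x = true) (habd : ∀ x' : α → Bool, t x' = true → P x' = P x)
    (I' : (α → Bool) → Bool)
    (hpos : P x = true → ∀ x' : α → Bool, I' x' = (I x' || t x'))
    (hneg : P x = false → ∀ x' : α → Bool, I' x' = (I x' && !(t x'))) :
    {x' : α → Bool | I' x' ≠ P x'} ⊂ {x' : α → Bool | I x' ≠ P x'} := by
  constructor
  · intro x' hx'
    simp only [Set.mem_setOf_eq] at *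
    intro hIx'
    apply hx'
    cases hPx : P x with
    | true =>
      rw [hpos hPx x']
      cases htx' : t x' with
      | true => rw [habd x' htx', hPx] at hIx' ⊢; simp [hIx']
      | false => simpa [htx'] using hIx'
    | false =>
      rw [hneg hPx x']
      cases htx' : t x' with
      | true => rw [habd x' htx', hPx] at hIx' ⊢; simp [hIx']
      | false => simpa [htx'] using hIx'
  · intro hsub
    have hxmem : x ∈ {x' : α → Bool | I x' ≠ P x'} := hx
    have := hsub hxmem
    simp only [Set.mem_setOf_eq] at this
    apply this
    cases hPx : P x with
    | true =>
      rw [hpos hPx x, hcov]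
      simp
    | false =>
      rw [hneg hPx x, hcov]
      simp
end

section
/- Rectification order does not matter for rules deduced from a common classifier: let Σ, Φ : (α → Bool) → Bool be binary classifiers and let R₁, R₂ be two classification rules (each either over y or over ¬y) both deduced from Φ. Then for every instance x, ((Σ ⋆ R₁) ⋆ R₂) x = ((Σ ⋆ R₂) ⋆ R₁) x. (Order-independence corollary of Lemmas 1–3.) -/
theorem rectify_order_independent {α : Type*} (S Φ : (α → Bool) → Bool)
    (R₁ R₂ : (α → Bool) → Bool → Bool)
    (h₁ : ∃ φ : (α → Bool) → Bool,
        (R₁ = rulePos φ ∧ ∀ x : α → Bool, φ x = true → Φ x = true) ∨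
        (R₁ = ruleNeg φ ∧ ∀ x : α → Bool, φ x = true → Φ x = false))
    (h₂ : ∃ φ : (α → Bool) → Bool,
        (R₂ = rulePos φ ∧ ∀ x : α → Bool, φ x = true → Φ x = true) ∨
        (R₂ = ruleNeg φ ∧ ∀ x : α → Bool, φ x = true → Φ x = false)) :
    ∀ x : α → Bool, rectify (rectify S R₁) R₂ x = rectify (rectify S R₂) R₁ x := by
  obtain ⟨φ, hφ⟩ := h₁
  obtain ⟨ψ, hψ⟩ := h₂
  intro x
  rcases hφ with ⟨rfl, hφ⟩ | ⟨rfl, hφ⟩ <;> rcases hψ with ⟨rfl, hψ⟩ | ⟨rfl, hψ⟩ <;>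
    simp only [rectify, rulePos, ruleNeg] <;>
    rcases hp : φ x with _ | _ <;> rcases hq : ψ x with _ | _ <;>
    simp_all <;> first | (have := hφ x hp; have := hψ x hq; simp_all) | (cases S x <;> simp_all)
end

section
/- Explicit formula for rectification by the conjunction of a positive rule and a negative rule: let Σ : (α → Bool) → Bool be a binary classifier, let R₁ be the classification rule over y with premise φ₁ and R₂ the classification rule over ¬y with premise φ₂. Then for every instance x, (Σ ⋆ (R₁ ∧ R₂)) x = true if and only if (Σ x = true and not (φ₁ x = false and φ₂ x = true)) or (φ₁ x = true and φ₂ x = false). Moreover, if no instance satisfies both φ₁ and φ₂, this simplifies to: (Σ ⋆ (R₁ ∧ R₂)) x = true iff (Σ x = true and φ₂ x = false) or φ₁ x = true. (Intermediate claim in the proof of Lemma 3.) -/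
theorem rectify_conj_pos_neg_formula {α : Type*} (S φ₁ φ₂ : (α → Bool) → Bool) :
    (∀ x : α → Bool,
      (rectify S (fconj (rulePos φ₁) (ruleNeg φ₂)) x = true ↔
        ((S x = true ∧ ¬ (φ₁ x = false ∧ φ₂ x = true)) ∨ (φ₁ x = true ∧ φ₂ x = false)))) ∧
    ((¬ ∃ x : α → Bool, φ₁ x = true ∧ φ₂ x = true) →
      ∀ x : α → Bool,
        (rectify S (fconj (rulePos φ₁) (ruleNeg φ₂)) x = true ↔
          ((S x = true ∧ φ₂ x = false) ∨ φ₁ x = true))) := by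
  constructor
  · intro x
    simp only [rectify, fconj, rulePos, ruleNeg]
    cases h1 : S x <;> cases h2 : φ₁ x <;> cases h3 : φ₂ x <;> simp
  · intro h x
    have hx : ¬(φ₁ x = true ∧ φ₂ x = true) := fun hc => h ⟨x, hc⟩
    simp only [rectify, fconj, rulePos, ruleNeg]
    cases h1 : S x <;> cases h2 : φ₁ x <;> cases h3 : φ₂ x <;> simp_all
end
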